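/- arXiv:1201.1877 — 5 statements merged into one kernel-verified Lean document; each statement's English description precedes it below -/
import Mathlib

section
/- Let H be a complex Hilbert space, L ⊆ H a closed Lagrangian real-linear subspace, η₀ ∈ H, and D : H → ℝ a continuous real-linear functional with D(ξ) = 2·ω(ξ,η₀) for all ξ ∈ L. Then for every η ∈ η₀ + L and every ξ ∈ H one has ρ^{D,η₀}(η + ξ) = ρ(ξ) · exp( (i/2)·D(η) + i·ω(ξ,η) ). -/
/-!
A Lagrangian subspace `L` is isotropic, `Im⟨x, y⟩ = 0` on `L`, and therefore `L ∩ J L = 0`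
because `Im⟨J y, y⟩ = -‖y‖²`. So the two decompositions `η + ξ = τR + J τI` and `ξ = a + J b`
are compatible: `τI = b` and `τR = η + a`. What remains is the identity
`D a = Im⟨a, η⟩`, which follows from `D = 2ω(·, η₀)` on `L` and isotropy since `η - η₀ ∈ L`,
together with `Im⟨a + J b, η⟩ = Im⟨a, η⟩ - Re⟨b, η⟩`.
-/

open Complex

section

variable {H : Type*} [NormedAddCommGroup H] [InnerProductSpace ℂ H]

theorem im_inner_add_I_smul_left (a b η : H) :
    (inner ℂ (a + I • b) η).im = (inner ℂ a η).im - (inner ℂ b η).re := by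
  rw [inner_add_left, inner_smul_left, conj_I, add_im, neg_mul, neg_im, mul_im, I_re, I_im]
  ring

def Submodule.IsIsotropic (L : Submodule ℝ H) : Prop :=
  ∀ x ∈ L, ∀ y ∈ L, (inner ℂ x y).im = 0

namespace Submodule.IsIsotropic

variable {L : Submodule ℝ H}

theorem of_eq_symplecticComplement
    (hLag : (L : Set H) = {x : H | ∀ ξ' ∈ L, (1/2 : ℝ) * (inner ℂ x ξ' : ℂ).im = 0}) :
    L.IsIsotropic := by
  intro x hx y hy
  simpa using hLag.subset hx y hy

theorem eq_zero_of_mem_of_I_smul_mem (hL : L.IsIsotropic) {y : H} (hy : y ∈ L)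
    (hIy : I • y ∈ L) : y = 0 := by
  have h := hL _ hIy _ hy
  rw [inner_smul_left, conj_I, inner_self_eq_norm_sq_to_K] at h
  have : ‖y‖ ^ 2 = 0 := by simpa [← ofReal_pow] using h
  simpa using this

theorem eq_and_eq_of_add_I_smul_eq (hL : L.IsIsotropic) {x₁ x₂ y₁ y₂ : H}
    (hx : x₁ - x₂ ∈ L) (hy₁ : y₁ ∈ L) (hy₂ : y₂ ∈ L) (h : x₁ + I • y₁ = x₂ + I • y₂) :
    x₁ = x₂ ∧ y₁ = y₂ := by
  have hI : I • (y₂ - y₁) = x₁ - x₂ := by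
    rw [smul_sub]
    linear_combination (norm := module) -h
  have hy : y₂ - y₁ = 0 := hL.eq_zero_of_mem_of_I_smul_mem (L.sub_mem hy₂ hy₁) (hI ▸ hx)
  obtain rfl : y₁ = y₂ := (sub_eq_zero.mp hy).symm
  exact ⟨add_right_cancel h, rfl⟩

theorem im_inner_add_right (hL : L.IsIsotropic) {a l : H} (ha : a ∈ L) (hl : l ∈ L) (η₀ : H) :
    (inner ℂ a (η₀ + l)).im = (inner ℂ a η₀).im := by
  rw [inner_add_right, add_im, hL a ha l hl, add_zero]

end Submodule.IsIsotropic

end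

theorem stmt_2_general
    {H : Type*} [NormedAddCommGroup H] [InnerProductSpace ℂ H]
    (L : Submodule ℝ H)
    (hLag : (L : Set H) = {x : H | ∀ ξ' ∈ L, (1/2 : ℝ) * (inner ℂ x ξ' : ℂ).im = 0})
    (η₀ : H) (D : H →L[ℝ] ℝ)
    (hD : ∀ ξ' ∈ L, D ξ' = 2 * ((1/2 : ℝ) * (inner ℂ ξ' η₀ : ℂ).im))
    (η ξ : H) (hη : ∃ l ∈ L, η = η₀ + l)
    (τR τI a b : H)
    (hτR : ∃ l ∈ L, τR = η₀ + l) (hτI : τI ∈ L)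
    (hdec : η + ξ = τR + Complex.I • τI)
    (ha : a ∈ L) (hb : b ∈ L) (hdec' : ξ = a + Complex.I • b) :
    Complex.exp ((Complex.I / 2) * (D τR : ℂ)
        - (Complex.I / 2) * ((inner ℂ τR τI : ℂ).re : ℂ)
        - (1/2 : ℂ) * ((inner ℂ τI τI : ℂ).re : ℂ)) =
      Complex.exp (-(Complex.I / 2) * ((inner ℂ a b : ℂ).re : ℂ)
          - (1/2 : ℂ) * ((inner ℂ b b : ℂ).re : ℂ)) *
        Complex.exp ((Complex.I / 2) * (D η : ℂ)
          + Complex.I * (((1/2 : ℝ) * (inner ℂ ξ η : ℂ).im : ℝ) : ℂ)) := by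
  have hL := Submodule.IsIsotropic.of_eq_symplecticComplement hLag
  obtain ⟨l, hl, rfl⟩ := hη
  obtain ⟨l', hl', rfl⟩ := hτR
  subst hdec'
  have hdiff : η₀ + l' - (η₀ + l + a) ∈ L := by
    rw [show η₀ + l' - (η₀ + l + a) = l' - (l + a) by abel]
    exact L.sub_mem hl' (L.add_mem hl ha)
  obtain ⟨hτR, rfl⟩ :=
    hL.eq_and_eq_of_add_I_smul_eq hdiff hτI hb (hdec.symm.trans (add_assoc _ _ _).symm)
  have hDa : D a = (inner ℂ a (η₀ + l)).im := by
    rw [hD a ha, hL.im_inner_add_right ha hl]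
    ring
  rw [hτR, ← Complex.exp_add]
  congr 1
  rw [map_add, hDa, inner_add_left, add_re, im_inner_add_I_smul_left,
    ← inner_conj_symm (η₀ + l) τI, conj_re]
  push_cast
  ring

/-- Lemma 4.1 of the paper.  Let `H` be a complex Hilbert space,
`L ⊆ H` a closed Lagrangian real-linear subspace, `η₀ ∈ H`, and `D : H → ℝ` a continuous
real-linear functional with `D(ξ) = 2·ω(ξ,η₀)` for all `ξ ∈ L`.  Then for every
`η ∈ η₀ + L` and every `ξ ∈ H`,
`ρ^{D,η₀}(η + ξ) = ρ(ξ) · exp((i/2)·D(η) + i·ω(ξ,η))`.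
Here `ρ^{D,η₀}(τ) = exp((i/2)·D(τ^R) − (i/2)·g(τ^R,τ^I) − (1/2)·g(τ^I,τ^I))` for the
decomposition `τ = τ^R + J τ^I` with `τ^R ∈ η₀ + L`, `τ^I ∈ L`, and
`ρ(ξ) = exp(−(i/2)·g(a,b) − (1/2)·g(b,b))` for `ξ = a + J b` with `a, b ∈ L`. -/
theorem stmt_2
    {H : Type*} [NormedAddCommGroup H] [InnerProductSpace ℂ H] [CompleteSpace H]
    (L : Submodule ℝ H) (hClosed : IsClosed (L : Set H))
    (hLag : (L : Set H) = {x : H | ∀ ξ' ∈ L, (1/2 : ℝ) * (inner ℂ x ξ' : ℂ).im = 0})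
    (η₀ : H) (D : H →L[ℝ] ℝ)
    (hD : ∀ ξ' ∈ L, D ξ' = 2 * ((1/2 : ℝ) * (inner ℂ ξ' η₀ : ℂ).im))
    (η ξ : H) (hη : ∃ l ∈ L, η = η₀ + l)
    (τR τI a b : H)
    (hτR : ∃ l ∈ L, τR = η₀ + l) (hτI : τI ∈ L)
    (hdec : η + ξ = τR + Complex.I • τI)
    (ha : a ∈ L) (hb : b ∈ L) (hdec' : ξ = a + Complex.I • b) :
    Complex.exp ((Complex.I / 2) * (D τR : ℂ)
        - (Complex.I / 2) * ((inner ℂ τR τI : ℂ).re : ℂ)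
        - (1/2 : ℂ) * ((inner ℂ τI τI : ℂ).re : ℂ)) =
      Complex.exp (-(Complex.I / 2) * ((inner ℂ a b : ℂ).re : ℂ)
          - (1/2 : ℂ) * ((inner ℂ b b : ℂ).re : ℂ)) *
        Complex.exp ((Complex.I / 2) * (D η : ℂ)
          + Complex.I * (((1/2 : ℝ) * (inner ℂ ξ η : ℂ).im : ℝ) : ℂ)) :=
  stmt_2_general L hLag η₀ D hD η ξ hη τR τI a b hτR hτI hdec ha hb hdec'
end

section
/- Let H be a complex Hilbert space, L ⊆ H a closed Lagrangian real-linear subspace, η₀ ∈ H, and D : H → ℝ a continuous real-linear functional with D(ξ) = 2·ω(ξ,η₀) for all ξ ∈ L. For τ ∈ H write τ = τ^R + J τ^I with τ^R, τ^I ∈ L. Then ρ^{D,η₀}(τ) = ρ(τ) · exp( i·D(τ^R) + D(τ^I) ) · ρ^{D,η₀}(0). (Here exp(i·D(τ^R) + D(τ^I)) equals F(τ̂), the complex-linear extension of the Weyl observable F = exp(i D) evaluated at τ̂ := τ^R − i·τ^I.) -/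
/-!
On an isotropic subspace `L` (one on which `ω` vanishes) the splitting `τ = a + J b` with
`a, b ∈ L` is unique, because `Re ⟪a, a + J b⟫ = ‖a‖² - Im ⟪a, b⟫ = ‖a‖²`. Comparing the
splittings of `τ` and of `0` through the affine space `η₀ + L` therefore gives `τ^R = a + z` and
`τ^I = b + w`, where `0 = z + J w`. Since `z = -J w ≡ η₀` modulo `L`, the condition on `D` becomes
`D ξ = -Re ⟪ξ, w⟫` on `L`, and the identity reduces to expanding the quadratic exponents.
-/

open Complex

open scoped ComplexInnerProductSpace

namespace Lagrangian

variable {H : Type*} [NormedAddCommGroup H] [InnerProductSpace ℂ H]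

/-- `ω` vanishes on `L × L`. -/
def IsIsotropic (L : Submodule ℝ H) : Prop :=
  ∀ x ∈ L, ∀ y ∈ L, (⟪x, y⟫).im = 0

theorem isIsotropic_of_lagrangian {L : Submodule ℝ H}
    (hLag : (L : Set H) = {x : H | ∀ ξ ∈ L, (1/2 : ℝ) * (inner ℂ x ξ : ℂ).im = 0}) :
    IsIsotropic L := by
  intro x hx y hy
  have hx' : x ∈ {x : H | ∀ ξ ∈ L, (1/2 : ℝ) * (inner ℂ x ξ : ℂ).im = 0} := hLag ▸ hx
  linarith [hx' y hy]

theorem re_inner_I_smul_left (x y : H) : (⟪I • x, y⟫).re = (⟪x, y⟫).im := by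
  simp

theorem im_inner_I_smul_right (x y : H) : (⟪x, I • y⟫).im = (⟪x, y⟫).re := by
  simp

variable {L : Submodule ℝ H}

theorem IsIsotropic.eq_zero_of_add_I_smul_eq_zero (hL : IsIsotropic L) {p q : H}
    (hp : p ∈ L) (hq : q ∈ L) (h : p + I • q = 0) : p = 0 ∧ q = 0 := by
  have hpp : (⟪p, p⟫).re = 0 := by
    have hre := congrArg re (congrArg (inner ℂ p) h)
    rw [inner_add_right, inner_zero_right, add_re, inner_smul_right, I_mul_re, hL p hp q hq,
      neg_zero, add_zero] at hre
    exact hre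
  have hp0 : p = 0 := re_inner_self_nonpos (𝕜 := ℂ).mp hpp.le
  refine ⟨hp0, ?_⟩
  rw [hp0, zero_add] at h
  exact (smul_eq_zero.mp h).resolve_left I_ne_zero

theorem IsIsotropic.add_I_smul_inj (hL : IsIsotropic L) {a b a' b' : H}
    (ha : a ∈ L) (hb : b ∈ L) (ha' : a' ∈ L) (hb' : b' ∈ L)
    (h : a + I • b = a' + I • b') : a = a' ∧ b = b' := by
  have h' : (a - a') + I • (b - b') = 0 := by
    rw [smul_sub, sub_add_sub_comm, h, sub_self]
  obtain ⟨h₁, h₂⟩ := hL.eq_zero_of_add_I_smul_eq_zero (sub_mem ha ha') (sub_mem hb hb') h'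
  exact ⟨sub_eq_zero.mp h₁, sub_eq_zero.mp h₂⟩

/-- The affine splitting of `τ` is that of `0` shifted by the linear splitting of `τ`. -/
theorem IsIsotropic.affine_parts_eq (hL : IsIsotropic L) {η₀ τ a b τR τI z w : H}
    (ha : a ∈ L) (hb : b ∈ L) (hab : τ = a + I • b)
    (hτR : ∃ l ∈ L, τR = η₀ + l) (hτI : τI ∈ L) (hτdec : τ = τR + I • τI)
    (hz : ∃ m ∈ L, z = η₀ + m) (hw : w ∈ L) (h0dec : (0 : H) = z + I • w) :
    τR = a + z ∧ τI = b + w := by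
  obtain ⟨l, hl, rfl⟩ := hτR
  obtain ⟨m, hm, rfl⟩ := hz
  have hsplit : a + I • b = (l - m) + I • (τI - w) := by
    rw [← hab, hτdec, smul_sub, ← sub_zero (_ + I • τI), h0dec]
    abel
  obtain ⟨rfl, rfl⟩ := hL.add_I_smul_inj ha hb (sub_mem hl hm) (sub_mem hτI hw) hsplit
  constructor <;> abel

theorem apply_eq_neg_re_inner (hL : IsIsotropic L) {η₀ z w : H} (D : H →L[ℝ] ℝ)
    (hD : ∀ ξ ∈ L, D ξ = 2 * ((1/2 : ℝ) * (inner ℂ ξ η₀ : ℂ).im))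
    (hz : ∃ m ∈ L, z = η₀ + m) (h0dec : (0 : H) = z + I • w) {ξ : H} (hξ : ξ ∈ L) :
    D ξ = -(⟪ξ, w⟫).re := by
  obtain ⟨m, hm, rfl⟩ := hz
  have hη₀ : η₀ = -(I • w) - m := by
    rw [eq_sub_iff_add_eq, ← neg_eq_iff_add_eq_zero.mpr h0dec.symm, neg_neg]
  rw [hD ξ hξ, hη₀, inner_sub_right, inner_neg_right, sub_im, neg_im, im_inner_I_smul_right,
    hL ξ hξ m hm]
  ring

/-- The exponent of the amplitude `ρ(a + J b)`. -/
noncomputable def amplitudeExponent (a b : H) : ℂ :=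
  -(I / 2) * ((⟪a, b⟫).re : ℂ) - (1/2 : ℂ) * ((⟪b, b⟫).re : ℂ)

/-- The exponent of the quantized Weyl observable `ρ^{D,η₀}(τR + J τI)`. -/
noncomputable def weylExponent (D : H →L[ℝ] ℝ) (τR τI : H) : ℂ :=
  (I / 2) * (D τR : ℂ) - (I / 2) * ((⟪τR, τI⟫).re : ℂ) - (1/2 : ℂ) * ((⟪τI, τI⟫).re : ℂ)

theorem weylExponent_add (hL : IsIsotropic L) (D : H →L[ℝ] ℝ) {a b w : H}
    (hb : b ∈ L) (hw : w ∈ L)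
    (hDa : D a = -(⟪a, w⟫).re) (hDb : D b = -(⟪b, w⟫).re) :
    weylExponent D (a + -(I • w)) (b + w) =
      amplitudeExponent a b + (I * (D a : ℂ) + (D b : ℂ)) + weylExponent D (-(I • w)) w := by
  have hwb : (⟪-(I • w), b⟫).re = 0 := by
    rw [inner_neg_left, neg_re, re_inner_I_smul_left, hL w hw b hb, neg_zero]
  have hww : (⟪-(I • w), w⟫).re = 0 := by
    rw [inner_neg_left, neg_re, re_inner_I_smul_left, hL w hw w hw, neg_zero]
  have hsymm : (⟪w, b⟫).re = (⟪b, w⟫).re := inner_re_symm (𝕜 := ℂ) w b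
  simp only [weylExponent, amplitudeExponent, map_add, inner_add_left, inner_add_right, add_re,
    hwb, hww, hsymm, hDa, hDb]
  push_cast
  ring

end Lagrangian

theorem stmt_3_general
    {H : Type*} [NormedAddCommGroup H] [InnerProductSpace ℂ H]
    (L : Submodule ℝ H)
    (hLag : (L : Set H) = {x : H | ∀ ξ ∈ L, (1/2 : ℝ) * (inner ℂ x ξ : ℂ).im = 0})
    (η₀ : H) (D : H →L[ℝ] ℝ)
    (hD : ∀ ξ ∈ L, D ξ = 2 * ((1/2 : ℝ) * (inner ℂ ξ η₀ : ℂ).im))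
    (τ a b τR τI z w : H)
    (ha : a ∈ L) (hb : b ∈ L) (hab : τ = a + Complex.I • b)
    (hτR : ∃ l ∈ L, τR = η₀ + l) (hτI : τI ∈ L) (hτdec : τ = τR + Complex.I • τI)
    (hz : ∃ l ∈ L, z = η₀ + l) (hw : w ∈ L) (h0dec : (0 : H) = z + Complex.I • w) :
    Complex.exp ((Complex.I / 2) * (D τR : ℂ)
        - (Complex.I / 2) * ((inner ℂ τR τI : ℂ).re : ℂ)
        - (1/2 : ℂ) * ((inner ℂ τI τI : ℂ).re : ℂ)) =
      Complex.exp (-(Complex.I / 2) * ((inner ℂ a b : ℂ).re : ℂ)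
          - (1/2 : ℂ) * ((inner ℂ b b : ℂ).re : ℂ)) *
        Complex.exp (Complex.I * (D a : ℂ) + (D b : ℂ)) *
        Complex.exp ((Complex.I / 2) * (D z : ℂ)
          - (Complex.I / 2) * ((inner ℂ z w : ℂ).re : ℂ)
          - (1/2 : ℂ) * ((inner ℂ w w : ℂ).re : ℂ)) := by
  have hL : Lagrangian.IsIsotropic L := Lagrangian.isIsotropic_of_lagrangian hLag
  obtain ⟨rfl, rfl⟩ := hL.affine_parts_eq ha hb hab hτR hτI hτdec hz hw h0dec
  have hDa := Lagrangian.apply_eq_neg_re_inner hL D hD hz h0dec ha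
  have hDb := Lagrangian.apply_eq_neg_re_inner hL D hD hz h0dec hb
  obtain rfl : z = -(I • w) := eq_neg_of_add_eq_zero_left h0dec.symm
  rw [← exp_add, ← exp_add]
  exact congrArg exp (Lagrangian.weylExponent_add hL D hb hw hDa hDb)

/-- factorization identity, Proposition 4.2(i) of the paper.
With `H`, `L`, `η₀`, `D` as before, write `τ = a + J b` with `a, b ∈ L` (so
`F(τ̂) = exp(i·D(a) + D(b))` for `τ̂ = a − i·b`), write `τ = τR + J τI` with
`τR ∈ η₀ + L`, `τI ∈ L`, and write `0 = z + J w` with `z ∈ η₀ + L`, `w ∈ L`.  Then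
`ρ^{D,η₀}(τ) = ρ(τ) · exp(i·D(a) + D(b)) · ρ^{D,η₀}(0)`. -/
theorem stmt_3
    {H : Type*} [NormedAddCommGroup H] [InnerProductSpace ℂ H] [CompleteSpace H]
    (L : Submodule ℝ H) (hClosed : IsClosed (L : Set H))
    (hLag : (L : Set H) = {x : H | ∀ ξ ∈ L, (1/2 : ℝ) * (inner ℂ x ξ : ℂ).im = 0})
    (η₀ : H) (D : H →L[ℝ] ℝ)
    (hD : ∀ ξ ∈ L, D ξ = 2 * ((1/2 : ℝ) * (inner ℂ ξ η₀ : ℂ).im))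
    (τ a b τR τI z w : H)
    (ha : a ∈ L) (hb : b ∈ L) (hab : τ = a + Complex.I • b)
    (hτR : ∃ l ∈ L, τR = η₀ + l) (hτI : τI ∈ L) (hτdec : τ = τR + Complex.I • τI)
    (hz : ∃ l ∈ L, z = η₀ + l) (hw : w ∈ L) (h0dec : (0 : H) = z + Complex.I • w) :
    Complex.exp ((Complex.I / 2) * (D τR : ℂ)
        - (Complex.I / 2) * ((inner ℂ τR τI : ℂ).re : ℂ)
        - (1/2 : ℂ) * ((inner ℂ τI τI : ℂ).re : ℂ)) =
      Complex.exp (-(Complex.I / 2) * ((inner ℂ a b : ℂ).re : ℂ)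
          - (1/2 : ℂ) * ((inner ℂ b b : ℂ).re : ℂ)) *
        Complex.exp (Complex.I * (D a : ℂ) + (D b : ℂ)) *
        Complex.exp ((Complex.I / 2) * (D z : ℂ)
          - (Complex.I / 2) * ((inner ℂ z w : ℂ).re : ℂ)
          - (1/2 : ℂ) * ((inner ℂ w w : ℂ).re : ℂ)) :=
  stmt_3_general L hLag η₀ D hD τ a b τR τI z w ha hb hab hτR hτI hτdec hz hw h0dec
end

section
/- Let H be a complex Hilbert space, L ⊆ H a closed Lagrangian real-linear subspace, η₀ ∈ H, and D : H → ℝ a continuous real-linear functional with D(ξ) = 2·ω(ξ,η₀) for all ξ ∈ L. Then the intersection (η₀ + L) ∩ J L contains exactly one element η_D, and the vacuum value of the quantized Weyl observable is ρ^{D,η₀}(0) = exp( (i/2)·D(η_D) − (1/2)·g(η_D, η_D) ). -/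
/-! Since `L` is Lagrangian, `J L` is exactly the orthogonal complement `Lᗮ` of `L` for the real
inner product `g = Re⟨·,·⟩`. So `(η₀ + L) ∩ J L` is the single point `η₀ - P_L η₀`, and the
decomposition `0 = z + J w` forces `z = η_D` and `w = J z`, whence `g(z, w) = 0` and
`g(w, w) = g(z, z)`. -/

open Complex
open scoped InnerProductSpace

namespace Submodule

variable {𝕜 E : Type*} [RCLike 𝕜] [NormedAddCommGroup E] [InnerProductSpace 𝕜 E]

theorem existsUnique_add_mem_orthogonal (K : Submodule 𝕜 E) [K.HasOrthogonalProjection] (p : E) :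
    ∃! q : E, (∃ k ∈ K, q = p + k) ∧ q ∈ Kᗮ := by
  obtain ⟨k, hk, q, hq, rfl⟩ := K.exists_add_mem_mem_orthogonal p
  refine ⟨q, ⟨⟨-k, neg_mem hk, by abel⟩, hq⟩, ?_⟩
  rintro q' ⟨⟨k', hk', rfl⟩, hq'⟩
  have hsub : k + k' ∈ K ⊓ Kᗮ :=
    mem_inf.2 ⟨add_mem hk hk', by convert sub_mem hq' hq using 1; abel⟩
  rw [K.inf_orthogonal_eq_bot, mem_bot] at hsub
  linear_combination (norm := module) hsub

end Submodule

section ComplexToReal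

attribute [local instance] InnerProductSpace.complexToReal

variable {H : Type*} [NormedAddCommGroup H] [InnerProductSpace ℂ H]

theorem real_inner_I_smul_right (x y : H) : ⟪x, I • y⟫_ℝ = (⟪y, x⟫_ℂ).im := by
  rw [real_inner_eq_re_inner ℂ, inner_smul_right, RCLike.re_to_complex, mul_re, I_re, I_im,
    ← inner_conj_symm x y, conj_im]
  ring

namespace Submodule

variable {L : Submodule ℝ H}

theorem I_smul_mem_orthogonal_iff {y : H} : I • y ∈ Lᗮ ↔ ∀ ξ ∈ L, (⟪y, ξ⟫_ℂ).im = 0 := by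
  simp only [mem_orthogonal, real_inner_I_smul_right]

theorem mem_iff_forall_im_inner_eq_zero_of_lagrangian
    (hLag : (L : Set H) = {x : H | ∀ ξ ∈ L, (1/2 : ℝ) * (⟪x, ξ⟫_ℂ).im = 0}) {x : H} :
    x ∈ L ↔ ∀ ξ ∈ L, (⟪x, ξ⟫_ℂ).im = 0 := by
  rw [← SetLike.mem_coe, hLag]
  simp

theorem mem_orthogonal_iff_exists_I_smul_of_lagrangian
    (hLag : (L : Set H) = {x : H | ∀ ξ ∈ L, (1/2 : ℝ) * (⟪x, ξ⟫_ℂ).im = 0}) {x : H} :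
    x ∈ Lᗮ ↔ ∃ y ∈ L, x = I • y := by
  constructor
  · intro hx
    refine ⟨-I • x, ?_, by simp [smul_smul]⟩
    rwa [mem_iff_forall_im_inner_eq_zero_of_lagrangian hLag, ← I_smul_mem_orthogonal_iff,
      smul_smul, mul_neg, I_mul_I, neg_neg, one_smul]
  · rintro ⟨y, hy, rfl⟩
    exact I_smul_mem_orthogonal_iff.2 ((mem_iff_forall_im_inner_eq_zero_of_lagrangian hLag).1 hy)

end Submodule

theorem re_inner_self_I_smul (z : H) : (⟪z, I • z⟫_ℂ).re = 0 :=
  real_inner_I_smul_self ℂ z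

theorem re_inner_I_smul_I_smul (z : H) : (⟪I • z, I • z⟫_ℂ).re = (⟪z, z⟫_ℂ).re := by
  simp [norm_smul]

end ComplexToReal

theorem stmt_4_general
    {H : Type*} [NormedAddCommGroup H] [InnerProductSpace ℂ H] [CompleteSpace H]
    (L : Submodule ℝ H) (hClosed : IsClosed (L : Set H))
    (hLag : (L : Set H) = {x : H | ∀ ξ ∈ L, (1/2 : ℝ) * (inner ℂ x ξ : ℂ).im = 0})
    (η₀ : H) (D : H →L[ℝ] ℝ) :
    (∃! ηD : H, (∃ l ∈ L, ηD = η₀ + l) ∧ (∃ x ∈ L, ηD = Complex.I • x)) ∧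
    (∀ ηD : H, (∃ l ∈ L, ηD = η₀ + l) → (∃ x ∈ L, ηD = Complex.I • x) →
      ∀ z w : H, (∃ l ∈ L, z = η₀ + l) → w ∈ L → (0 : H) = z + Complex.I • w →
        Complex.exp ((Complex.I / 2) * (D z : ℂ)
            - (Complex.I / 2) * ((inner ℂ z w : ℂ).re : ℂ)
            - (1/2 : ℂ) * ((inner ℂ w w : ℂ).re : ℂ)) =
          Complex.exp ((Complex.I / 2) * (D ηD : ℂ)
            - (1/2 : ℂ) * ((inner ℂ ηD ηD : ℂ).re : ℂ))) := by
  let _ : InnerProductSpace ℝ H := InnerProductSpace.complexToReal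
  have : CompleteSpace L := hClosed.completeSpace_coe
  have hJL (η : H) : (∃ x ∈ L, η = I • x) ↔ η ∈ Lᗮ :=
    (Submodule.mem_orthogonal_iff_exists_I_smul_of_lagrangian hLag).symm
  have hunique := L.existsUnique_add_mem_orthogonal η₀
  refine ⟨(existsUnique_congr fun η ↦ and_congr_right' (hJL η)).2 hunique, ?_⟩
  rintro ηD hηD hJηD z w hz hw hzw
  have hzJL : z = I • -w := by rw [smul_neg, eq_neg_of_add_eq_zero_left hzw.symm]
  have hwz : w = I • z := by rw [hzJL, smul_smul, I_mul_I, neg_one_smul, neg_neg]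
  obtain rfl : z = ηD :=
    hunique.unique ⟨hz, (hJL z).1 ⟨-w, neg_mem hw, hzJL⟩⟩ ⟨hηD, (hJL ηD).1 hJηD⟩
  rw [hwz, re_inner_self_I_smul, re_inner_I_smul_I_smul]
  congr 1
  push_cast
  ring

/-- vacuum value of a quantized Weyl observable, Proposition 4.2(ii).
With `H`, `L`, `η₀`, `D` as before, the intersection `(η₀ + L) ∩ J L` contains exactly
one element `η_D`, and for the decomposition `0 = z + J w` with `z ∈ η₀ + L`, `w ∈ L`,
`ρ^{D,η₀}(0) = exp((i/2)·D(η_D) − (1/2)·g(η_D,η_D))`. -/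
theorem stmt_4
    {H : Type*} [NormedAddCommGroup H] [InnerProductSpace ℂ H] [CompleteSpace H]
    (L : Submodule ℝ H) (hClosed : IsClosed (L : Set H))
    (hLag : (L : Set H) = {x : H | ∀ ξ ∈ L, (1/2 : ℝ) * (inner ℂ x ξ : ℂ).im = 0})
    (η₀ : H) (D : H →L[ℝ] ℝ)
    (hD : ∀ ξ ∈ L, D ξ = 2 * ((1/2 : ℝ) * (inner ℂ ξ η₀ : ℂ).im)) :
    (∃! ηD : H, (∃ l ∈ L, ηD = η₀ + l) ∧ (∃ x ∈ L, ηD = Complex.I • x)) ∧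
    (∀ ηD : H, (∃ l ∈ L, ηD = η₀ + l) → (∃ x ∈ L, ηD = Complex.I • x) →
      ∀ z w : H, (∃ l ∈ L, z = η₀ + l) → w ∈ L → (0 : H) = z + Complex.I • w →
        Complex.exp ((Complex.I / 2) * (D z : ℂ)
            - (Complex.I / 2) * ((inner ℂ z w : ℂ).re : ℂ)
            - (1/2 : ℂ) * ((inner ℂ w w : ℂ).re : ℂ)) =
          Complex.exp ((Complex.I / 2) * (D ηD : ℂ)
            - (1/2 : ℂ) * ((inner ℂ ηD ηD : ℂ).re : ℂ))) :=
  stmt_4_general L hClosed hLag η₀ D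
end

section
/- Let H be a complex Hilbert space and L ⊆ H a closed Lagrangian real-linear subspace. Let n ∈ ℕ, λ₁,…,λ_n ∈ ℂ, and for each k let D_k : H → ℝ be a continuous real-linear functional and η_k ∈ H a point with D_k(ξ) = 2·ω(ξ,η_k) for all ξ ∈ L. Fix τ ∈ H and write τ = τ^R + J τ^I with τ^R, τ^I ∈ L. Then the quantization of F = Σ_k λ_k·exp(i D_k) satisfies the coherent factorization property: Σ_{k=1}^n λ_k · ρ^{D_k,η_k}(τ) = ρ(τ) · Σ_{k=1}^n λ_k · exp( i·D_k(τ^R) + D_k(τ^I) ) · ρ^{D_k,η_k}(0). (The right-hand sum is the quantization of the shifted observable F'(ξ) := F(ξ + τ̂), τ̂ := τ^R − i·τ^I, evaluated on the vacuum.) -/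
/-!
Since `L` is isotropic for `Im ⟪·, ·⟫`, it meets `i • L` only in `0`, so decompositions
`x + i • y` with `x, y ∈ L` are unique. Comparing the decompositions of `τ` and of `0` relative to
`η_k + L` gives `τ^R = a + z_k` and `τ^I = b + w_k` with `z_k = -(i • w_k)`. As `η_k + i • w_k ∈ L`,
the functional `D_k` equals `-Re ⟪·, w_k⟫` on `L`, and substituting into the Weyl phase splits the
phase of `ρ^{D_k,η_k}(τ)` into that of `ρ(τ)`, plus `i D_k(a) + D_k(b)`, plus that of
`ρ^{D_k,η_k}(0)`.
-/

open Complex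

section Isotropic

variable {H : Type*} [NormedAddCommGroup H] [InnerProductSpace ℂ H] {L : Submodule ℝ H}

theorem eq_zero_of_mem_of_I_smul_mem (hL : ∀ x ∈ L, ∀ y ∈ L, (inner ℂ x y).im = 0)
    {v : H} (hv : v ∈ L) (hIv : I • v ∈ L) : v = 0 := by
  have h := hL v hv _ hIv
  rw [inner_smul_right, I_mul_im] at h
  exact re_inner_self_nonpos (𝕜 := ℂ) |>.mp h.le

theorem eq_and_eq_of_add_I_smul_eq (hL : ∀ x ∈ L, ∀ y ∈ L, (inner ℂ x y).im = 0)
    {x₁ y₁ x₂ y₂ : H} (hx₁ : x₁ ∈ L) (hy₁ : y₁ ∈ L) (hx₂ : x₂ ∈ L) (hy₂ : y₂ ∈ L)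
    (h : x₁ + I • y₁ = x₂ + I • y₂) : x₁ = x₂ ∧ y₁ = y₂ := by
  have hI : I • (y₂ - y₁) ∈ L := by
    rw [show I • (y₂ - y₁) = x₁ - x₂ by linear_combination (norm := module) -h]
    exact sub_mem hx₁ hx₂
  obtain rfl : y₁ = y₂ :=
    (sub_eq_zero.mp (eq_zero_of_mem_of_I_smul_mem hL (sub_mem hy₂ hy₁) hI)).symm
  exact ⟨add_right_cancel h, rfl⟩

theorem im_inner_eq_neg_re_inner (hL : ∀ x ∈ L, ∀ y ∈ L, (inner ℂ x y).im = 0)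
    {x η w : H} (hx : x ∈ L) (hη : η + I • w ∈ L) :
    (inner ℂ x η).im = -(inner ℂ x w).re := by
  have h := hL x hx _ hη
  rw [inner_add_right, inner_smul_right, add_im, I_mul_im] at h
  linarith

theorem eq_add_of_add_I_smul_eq (hL : ∀ x ∈ L, ∀ y ∈ L, (inner ℂ x y).im = 0)
    {a b r s z w : H} (ha : a ∈ L) (hb : b ∈ L) (hs : s ∈ L) (hw : w ∈ L) (hrz : r - z ∈ L)
    (h : a + I • b = r + I • s) (h0 : z + I • w = 0) : r = a + z ∧ s = b + w := by
  obtain ⟨rfl, rfl⟩ := eq_and_eq_of_add_I_smul_eq hL ha hb hrz (sub_mem hs hw)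
    (by linear_combination (norm := module) h + h0)
  constructor <;> abel

theorem exp_phase_factorization (hL : ∀ x ∈ L, ∀ y ∈ L, (inner ℂ x y).im = 0)
    (d : H →L[ℝ] ℝ) {a b w z : H} (hb : b ∈ L) (hw : w ∈ L) (hz : z = -(I • w))
    (hda : d a = -(inner ℂ a w).re) (hdb : d b = -(inner ℂ b w).re) :
    exp (I / 2 * (d (a + z) : ℂ) - I / 2 * ((inner ℂ (a + z) (b + w)).re : ℂ)
        - 1 / 2 * ((inner ℂ (b + w) (b + w)).re : ℂ)) =
      exp (-(I / 2) * ((inner ℂ a b).re : ℂ) - 1 / 2 * ((inner ℂ b b).re : ℂ)) *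
        exp (I * (d a : ℂ) + (d b : ℂ)) *
        exp (I / 2 * (d z : ℂ) - I / 2 * ((inner ℂ z w).re : ℂ)
          - 1 / 2 * ((inner ℂ w w).re : ℂ)) := by
  have hzb : (inner ℂ z b).re = 0 := by
    rw [hz, inner_neg_left, inner_smul_left]
    simp [hL w hw b hb]
  have hwb : (inner ℂ w b).re = (inner ℂ b w).re := inner_re_symm (𝕜 := ℂ) w b
  rw [← exp_add, ← exp_add]
  congr 1
  simp only [map_add, inner_add_left, inner_add_right, add_re, hzb, hwb, hda, hdb]
  push_cast
  ring

end Isotropic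

theorem stmt_6_general
    {H : Type*} [NormedAddCommGroup H] [InnerProductSpace ℂ H]
    (L : Submodule ℝ H)
    (hLag : (L : Set H) = {x : H | ∀ ξ ∈ L, (1/2 : ℝ) * (inner ℂ x ξ : ℂ).im = 0})
    (n : ℕ) (lam : Fin n → ℂ) (D : Fin n → (H →L[ℝ] ℝ)) (η : Fin n → H)
    (hD : ∀ k, ∀ ξ ∈ L, D k ξ = 2 * ((1/2 : ℝ) * (inner ℂ ξ (η k) : ℂ).im))
    (τ a b : H) (ha : a ∈ L) (hb : b ∈ L) (hab : τ = a + Complex.I • b)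
    (r s z w : Fin n → H)
    (hr : ∀ k, ∃ l ∈ L, r k = η k + l) (hs : ∀ k, s k ∈ L)
    (hτdec : ∀ k, τ = r k + Complex.I • s k)
    (hz : ∀ k, ∃ l ∈ L, z k = η k + l) (hw : ∀ k, w k ∈ L)
    (h0dec : ∀ k, (0 : H) = z k + Complex.I • w k) :
    ∑ k : Fin n, lam k *
        Complex.exp ((Complex.I / 2) * (D k (r k) : ℂ)
          - (Complex.I / 2) * ((inner ℂ (r k) (s k) : ℂ).re : ℂ)
          - (1/2 : ℂ) * ((inner ℂ (s k) (s k) : ℂ).re : ℂ)) =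
      Complex.exp (-(Complex.I / 2) * ((inner ℂ a b : ℂ).re : ℂ)
          - (1/2 : ℂ) * ((inner ℂ b b : ℂ).re : ℂ)) *
        ∑ k : Fin n, lam k *
          Complex.exp (Complex.I * (D k a : ℂ) + (D k b : ℂ)) *
          Complex.exp ((Complex.I / 2) * (D k (z k) : ℂ)
            - (Complex.I / 2) * ((inner ℂ (z k) (w k) : ℂ).re : ℂ)
            - (1/2 : ℂ) * ((inner ℂ (w k) (w k) : ℂ).re : ℂ)) := by
  have hL : ∀ x ∈ L, ∀ y ∈ L, (inner ℂ x y).im = 0 := fun x hx y hy => by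
    have := hLag.subset hx y hy
    linarith
  rw [Finset.mul_sum]
  refine Finset.sum_congr rfl fun k _ => ?_
  obtain ⟨l, hl, hrl⟩ := hr k
  obtain ⟨m, hm, hzm⟩ := hz k
  have hzw : z k = -(I • w k) := eq_neg_of_add_eq_zero_left (h0dec k).symm
  have hηw : η k + I • w k ∈ L := by
    rw [show η k + I • w k = -m by linear_combination (norm := module) (h0dec k).symm - hzm]
    exact neg_mem hm
  have hrz : r k - z k ∈ L := by
    rw [hrl, hzm, add_sub_add_left_eq_sub]
    exact sub_mem hl hm
  obtain ⟨hrk, hsk⟩ := eq_add_of_add_I_smul_eq hL ha hb (hs k) (hw k) hrz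
    (hab.symm.trans (hτdec k)) (h0dec k).symm
  have hDw : ∀ x ∈ L, D k x = -(inner ℂ x (w k)).re := fun x hx => by
    rw [hD k x hx, ← im_inner_eq_neg_re_inner hL hx hηw]
    ring
  rw [hrk, hsk, exp_phase_factorization hL (D k) hb (hw k) hzw (hDw a ha) (hDw b hb)]
  ring

/-- coherent factorization property, Proposition 4.3 of the paper.
Let `H` be a complex Hilbert space and `L ⊆ H` a closed Lagrangian real-linear subspace.
Let `λ₁,…,λ_n ∈ ℂ` and, for each `k`, let `D_k : H → ℝ` be a continuous real-linear
functional and `η_k ∈ H` with `D_k(ξ) = 2·ω(ξ,η_k)` for all `ξ ∈ L`.  Fix `τ ∈ H` and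
write `τ = a + J b` with `a, b ∈ L`; for each `k` write `τ = r k + J (s k)` with
`r k ∈ η_k + L`, `s k ∈ L`, and `0 = z k + J (w k)` with `z k ∈ η_k + L`, `w k ∈ L`.
Then the quantization of `F = Σ_k λ_k·exp(i·D_k)` satisfies
`Σ_k λ_k·ρ^{D_k,η_k}(τ) = ρ(τ) · Σ_k λ_k·exp(i·D_k(a) + D_k(b))·ρ^{D_k,η_k}(0)`. -/
theorem stmt_6
    {H : Type*} [NormedAddCommGroup H] [InnerProductSpace ℂ H] [CompleteSpace H]
    (L : Submodule ℝ H) (hClosed : IsClosed (L : Set H))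
    (hLag : (L : Set H) = {x : H | ∀ ξ ∈ L, (1/2 : ℝ) * (inner ℂ x ξ : ℂ).im = 0})
    (n : ℕ) (lam : Fin n → ℂ) (D : Fin n → (H →L[ℝ] ℝ)) (η : Fin n → H)
    (hD : ∀ k, ∀ ξ ∈ L, D k ξ = 2 * ((1/2 : ℝ) * (inner ℂ ξ (η k) : ℂ).im))
    (τ a b : H) (ha : a ∈ L) (hb : b ∈ L) (hab : τ = a + Complex.I • b)
    (r s z w : Fin n → H)
    (hr : ∀ k, ∃ l ∈ L, r k = η k + l) (hs : ∀ k, s k ∈ L)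
    (hτdec : ∀ k, τ = r k + Complex.I • s k)
    (hz : ∀ k, ∃ l ∈ L, z k = η k + l) (hw : ∀ k, w k ∈ L)
    (h0dec : ∀ k, (0 : H) = z k + Complex.I • w k) :
    ∑ k : Fin n, lam k *
        Complex.exp ((Complex.I / 2) * (D k (r k) : ℂ)
          - (Complex.I / 2) * ((inner ℂ (r k) (s k) : ℂ).re : ℂ)
          - (1/2 : ℂ) * ((inner ℂ (s k) (s k) : ℂ).re : ℂ)) =
      Complex.exp (-(Complex.I / 2) * ((inner ℂ a b : ℂ).re : ℂ)
          - (1/2 : ℂ) * ((inner ℂ b b : ℂ).re : ℂ)) *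
        ∑ k : Fin n, lam k *
          Complex.exp (Complex.I * (D k a : ℂ) + (D k b : ℂ)) *
          Complex.exp ((Complex.I / 2) * (D k (z k) : ℂ)
            - (Complex.I / 2) * ((inner ℂ (z k) (w k) : ℂ).re : ℂ)
            - (1/2 : ℂ) * ((inner ℂ (w k) (w k) : ℂ).re : ℂ)) :=
  stmt_6_general L hLag n lam D η hD τ a b ha hb hab r s z w hr hs hτdec hz hw h0dec
end

section
/- Let H be a complex Hilbert space, L ⊆ H a closed Lagrangian real-linear subspace, η₀ ∈ H, and D : H → ℝ a continuous real-linear functional with D(ξ) = 2·ω(ξ,η₀) for all ξ ∈ L. Fix τ ∈ H and write τ = a + J b with a, b ∈ L. Then the function f : ℝ → ℂ defined by f(λ) := ρ^{λ·D, λ·η₀}(τ) (the quantization of the Weyl observable exp(i·λ·D) evaluated on the coherent state of τ) is differentiable at λ = 0 with derivative f'(0) = i · ρ(τ) · ( D(a) − i·D(b) ). Equivalently, the quantization of the linear observable D, defined by ρ^D(τ) := −i·f'(0), equals ρ(τ)·( D(a) − i·D(b) ) = ρ(τ)·D̂(τ̂), where τ̂ := a − i·b. -/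
/-!
Isotropy of `L` makes `x + J y = 0` with `x, y ∈ L` force `x = y = 0` (take the real part of
`⟪x, x + J y⟫`). Hence the decomposition `τ = r λ + J s λ` is unique, so it is affine in `λ`:
`r λ = a + λ u`, `s λ = b + λ v` with `v ∈ L` and `u = -J v`. Then `η₀ ∈ -J v + L`, which gives
`D = -g(·, v)` on `L`. The derivative at `0` of the exponent of `f` is
`(i/2) D a - (i/2) (g(a, v) + g(u, b)) - g(b, v)`, and `g(u, b) = -Im⟪v, b⟫ = 0`, so it
equals `i D a + D b = i (D a - i D b)`.
-/

open Complex (I)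

theorem hasDerivAt_add_smul {E : Type*} [NormedAddCommGroup E] [NormedSpace ℝ E] (x y : E)
    (t : ℝ) : HasDerivAt (fun t : ℝ => x + t • y) y t := by
  simpa using ((hasDerivAt_id t).smul_const y).const_add x

section

variable {H : Type*} [NormedAddCommGroup H] [InnerProductSpace ℂ H]

theorem hasDerivAt_re_inner_add_smul (a u b v : H) :
    HasDerivAt (fun t : ℝ => (inner ℂ (a + t • u) (b + t • v)).re)
      ((inner ℂ a v).re + (inner ℂ u b).re) 0 :=
  (Complex.reCLM.hasFDerivAt.comp_hasDerivAt 0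
    ((hasDerivAt_add_smul a u 0).inner ℂ (hasDerivAt_add_smul b v 0))).congr_deriv (by simp)

/-- The exponent of `ρ^{λ D, λ η₀}(x + J y)` for `x ∈ λ η₀ + L` and `y ∈ L`. -/
noncomputable def weylExponent (D : H →L[ℝ] ℝ) (lam : ℝ) (x y : H) : ℂ :=
  I / 2 * ((lam * D x : ℝ) : ℂ) - I / 2 * ((inner ℂ x y).re : ℂ)
    - 1 / 2 * ((inner ℂ y y).re : ℂ)

theorem hasDerivAt_weylExponent (D : H →L[ℝ] ℝ) (a u b v : H) :
    HasDerivAt (fun lam : ℝ => weylExponent D lam (a + lam • u) (b + lam • v))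
      (I / 2 * D a - I / 2 * ((inner ℂ a v).re + (inner ℂ u b).re : ℝ)
        - 1 / 2 * ((inner ℂ b v).re + (inner ℂ v b).re : ℝ)) 0 := by
  have hD : HasDerivAt (fun lam : ℝ => lam * D (a + lam • u)) (D a) 0 :=
    ((hasDerivAt_id 0).mul (D.hasFDerivAt.comp_hasDerivAt 0 (hasDerivAt_add_smul a u 0))).congr_deriv
      (by simp)
  exact ((hD.ofReal_comp.const_mul (I / 2)).sub
    ((hasDerivAt_re_inner_add_smul a u b v).ofReal_comp.const_mul (I / 2))).sub
    ((hasDerivAt_re_inner_add_smul b v b v).ofReal_comp.const_mul (1 / 2))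

variable {L : Submodule ℝ H}

theorem eq_zero_of_add_I_smul_eq_zero (hL : ∀ x ∈ L, ∀ y ∈ L, (inner ℂ x y).im = 0)
    {x y : H} (hx : x ∈ L) (hy : y ∈ L) (h : x + I • y = 0) : x = 0 ∧ y = 0 := by
  have hre : (inner ℂ x (x + I • y)).re = ‖x‖ ^ 2 := by
    simp [hL x hx y hy, ← Complex.ofReal_pow]
  have hx0 : x = 0 := by simpa [h] using hre.symm
  subst hx0
  simpa using h

theorem eq_add_smul_of_decomposition (hL : ∀ x ∈ L, ∀ y ∈ L, (inner ℂ x y).im = 0)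
    {η₀ τ : H} {r s : ℝ → H} (hr : ∀ lam : ℝ, ∃ l ∈ L, r lam = lam • η₀ + l)
    (hs : ∀ lam : ℝ, s lam ∈ L) (hτ : ∀ lam : ℝ, τ = r lam + I • s lam) (lam : ℝ) :
    r lam = r 0 + lam • (r 1 - r 0) ∧ s lam = s 0 + lam • (s 1 - s 0) := by
  obtain ⟨l, hl, hrl⟩ := hr lam
  obtain ⟨l₀, hl₀, hr₀⟩ := hr 0
  obtain ⟨l₁, hl₁, hr₁⟩ := hr 1
  have hx : r lam - (r 0 + lam • (r 1 - r 0)) ∈ L := by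
    have : r lam - (r 0 + lam • (r 1 - r 0)) = l - l₀ - lam • (l₁ - l₀) := by
      rw [hrl, hr₀, hr₁]; module
    rw [this]
    exact L.sub_mem (L.sub_mem hl hl₀) (L.smul_mem lam (L.sub_mem hl₁ hl₀))
  have hy : s lam - (s 0 + lam • (s 1 - s 0)) ∈ L :=
    L.sub_mem (hs lam) (L.add_mem (hs 0) (L.smul_mem lam (L.sub_mem (hs 1) (hs 0))))
  have hsum :
      r lam - (r 0 + lam • (r 1 - r 0)) + I • (s lam - (s 0 + lam • (s 1 - s 0))) = 0 := by
    linear_combination (norm := module) hτ 0 - hτ lam + lam • (hτ 1 - hτ 0)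
  obtain ⟨hx0, hy0⟩ := eq_zero_of_add_I_smul_eq_zero hL hx hy hsum
  exact ⟨sub_eq_zero.mp hx0, sub_eq_zero.mp hy0⟩

end

theorem stmt_7_general
    {H : Type*} [NormedAddCommGroup H] [InnerProductSpace ℂ H]
    (L : Submodule ℝ H)
    (hLag : (L : Set H) = {x : H | ∀ ξ ∈ L, (1/2 : ℝ) * (inner ℂ x ξ : ℂ).im = 0})
    (η₀ : H) (D : H →L[ℝ] ℝ)
    (hD : ∀ ξ ∈ L, D ξ = 2 * ((1/2 : ℝ) * (inner ℂ ξ η₀ : ℂ).im))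
    (τ a b : H) (ha : a ∈ L) (hb : b ∈ L) (hab : τ = a + Complex.I • b)
    (r s : ℝ → H)
    (hr : ∀ lam : ℝ, ∃ l ∈ L, r lam = lam • η₀ + l) (hs : ∀ lam : ℝ, s lam ∈ L)
    (hτdec : ∀ lam : ℝ, τ = r lam + Complex.I • s lam)
    (f : ℝ → ℂ)
    (hf : ∀ lam : ℝ, f lam =
      Complex.exp ((Complex.I / 2) * ((lam * D (r lam) : ℝ) : ℂ)
        - (Complex.I / 2) * ((inner ℂ (r lam) (s lam) : ℂ).re : ℂ)
        - (1/2 : ℂ) * ((inner ℂ (s lam) (s lam) : ℂ).re : ℂ))) :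
    HasDerivAt f
      (Complex.I *
        Complex.exp (-(Complex.I / 2) * ((inner ℂ a b : ℂ).re : ℂ)
          - (1/2 : ℂ) * ((inner ℂ b b : ℂ).re : ℂ)) *
        ((D a : ℂ) - Complex.I * (D b : ℂ))) 0 := by
  have hL : ∀ x ∈ L, ∀ y ∈ L, (inner ℂ x y).im = 0 := fun x hx y hy => by
    have := (hLag ▸ hx : x ∈ {x : H | ∀ ξ ∈ L, (1/2 : ℝ) * (inner ℂ x ξ).im = 0}) y hy
    linarith
  obtain ⟨l₀, hl₀, hr₀⟩ := hr 0
  obtain ⟨l₁, hl₁, hr₁⟩ := hr 1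
  obtain ⟨hra, hsb⟩ : r 0 = a ∧ s 0 = b := by
    have hr0 : r 0 ∈ L := by simpa [hr₀] using hl₀
    have := eq_zero_of_add_I_smul_eq_zero hL (L.sub_mem hr0 ha) (L.sub_mem (hs 0) hb)
      (by linear_combination (norm := module) hab - hτdec 0)
    exact ⟨sub_eq_zero.mp this.1, sub_eq_zero.mp this.2⟩
  set u := r 1 - a
  set v := s 1 - b
  have hv : v ∈ L := L.sub_mem (hs 1) hb
  have hu : u = -(I • v) := by linear_combination (norm := module) hab - hτdec 1
  have hη₀ : η₀ = (a - l₁) + I • (-v) := by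
    rw [one_smul] at hr₁
    linear_combination (norm := module) hab - hτdec 1 - hr₁
  have hDL : ∀ ξ ∈ L, D ξ = -(inner ℂ ξ v).re := fun ξ hξ => by
    rw [hD ξ hξ, hη₀, inner_add_right, Complex.add_im, hL ξ hξ _ (L.sub_mem ha hl₁)]
    simp [inner_smul_right]
  have hub : (inner ℂ u b).re = 0 := by simp [hu, inner_smul_left, hL v hv b hb]
  have hvb : (inner ℂ v b).re = (inner ℂ b v).re := inner_re_symm (𝕜 := ℂ) v b
  have hf' : f = fun lam : ℝ => Complex.exp (weylExponent D lam (a + lam • u) (b + lam • v)) := by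
    funext lam
    obtain ⟨hrl, hsl⟩ := eq_add_smul_of_decomposition hL hr hs hτdec lam
    rw [hf, hrl, hsl, hra, hsb]
    rfl
  rw [hf']
  convert (hasDerivAt_weylExponent D a u b v).cexp using 1
  rw [hub, hvb, hDL a ha, hDL b hb]
  simp only [weylExponent, zero_smul, add_zero, zero_mul]
  push_cast
  ring_nf
  rw [Complex.I_sq]
  ring

/-- quantization of a linear observable.  With `H`, `L`, `η₀`, `D` as
before, fix `τ = a + J b` with `a, b ∈ L`.  For each `λ ∈ ℝ` let `τ = r λ + J (s λ)` be
the decomposition with `r λ ∈ λ·η₀ + L`, `s λ ∈ L`, and let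
`f(λ) := ρ^{λ·D, λ·η₀}(τ) = exp((i/2)·λ·D(r λ) − (i/2)·g(r λ, s λ) − (1/2)·g(s λ, s λ))`
be the quantization of the Weyl observable `exp(i·λ·D)` on the coherent state of `τ`.
Then `f` is differentiable at `0` with `f'(0) = i·ρ(τ)·(D(a) − i·D(b))`; i.e. the
quantization of the linear observable `D` is `ρ^D(τ) = −i·f'(0) = ρ(τ)·D̂(τ̂)`. -/
theorem stmt_7
    {H : Type*} [NormedAddCommGroup H] [InnerProductSpace ℂ H] [CompleteSpace H]
    (L : Submodule ℝ H) (hClosed : IsClosed (L : Set H))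
    (hLag : (L : Set H) = {x : H | ∀ ξ ∈ L, (1/2 : ℝ) * (inner ℂ x ξ : ℂ).im = 0})
    (η₀ : H) (D : H →L[ℝ] ℝ)
    (hD : ∀ ξ ∈ L, D ξ = 2 * ((1/2 : ℝ) * (inner ℂ ξ η₀ : ℂ).im))
    (τ a b : H) (ha : a ∈ L) (hb : b ∈ L) (hab : τ = a + Complex.I • b)
    (r s : ℝ → H)
    (hr : ∀ lam : ℝ, ∃ l ∈ L, r lam = lam • η₀ + l) (hs : ∀ lam : ℝ, s lam ∈ L)
    (hτdec : ∀ lam : ℝ, τ = r lam + Complex.I • s lam)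
    (f : ℝ → ℂ)
    (hf : ∀ lam : ℝ, f lam =
      Complex.exp ((Complex.I / 2) * ((lam * D (r lam) : ℝ) : ℂ)
        - (Complex.I / 2) * ((inner ℂ (r lam) (s lam) : ℂ).re : ℂ)
        - (1/2 : ℂ) * ((inner ℂ (s lam) (s lam) : ℂ).re : ℂ))) :
    HasDerivAt f
      (Complex.I *
        Complex.exp (-(Complex.I / 2) * ((inner ℂ a b : ℂ).re : ℂ)
          - (1/2 : ℂ) * ((inner ℂ b b : ℂ).re : ℂ)) *
        ((D a : ℂ) - Complex.I * (D b : ℂ))) 0 :=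
  stmt_7_general L hLag η₀ D hD τ a b ha hb hab r s hr hs hτdec f hf
end
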